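/- arXiv:2409.13767 — 2 statements merged into one kernel-verified Lean document; each statement's English description precedes it below -/
import Mathlib

section
/- Hohenberg–Kohn energy inequality argument: Let H be a Hilbert space and A₁, A₂ self-adjoint operators with common form domain, with A₂ = A₁ + P where P is a bounded symmetric operator. Suppose ψ₁ is a ground state of A₁ with energy E₁ = inf spec(A₁), ψ₂ is a ground state of A₂ with energy E₂, and ⟨ψ₁, P ψ₁⟩ = ⟨ψ₂, P ψ₂⟩ =: p. Then E₂ = E₁ + p, ψ₁ is also a ground state of A₂, and ψ₂ is also a ground state of A₁. -/
/-!
Each ground state is a trial state for the other operator. Since `P` has the same expectation `p`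
in both, the variational principle gives `E₂ ≤ E₁ + p` and `E₁ ≤ E₂ - p`, so both are equalities
and the trial energies are the ground-state energies.
-/

open RCLike

namespace ContinuousLinearMap

variable {𝕜 E : Type*} [RCLike 𝕜] [NormedAddCommGroup E] [InnerProductSpace 𝕜 E]

/-- For self-adjoint `T` the infimum of this set is `inf spec T` (variational principle). -/
def expectationValues (T : E →L[𝕜] E) : Set ℝ :=
  {e | ∃ ψ : E, ‖ψ‖ = 1 ∧ e = re (inner 𝕜 (T ψ) ψ)}

theorem re_inner_add_apply_self (S T : E →L[𝕜] E) (ψ : E) :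
    re (inner 𝕜 ((S + T) ψ) ψ) = re (inner 𝕜 (S ψ) ψ) + re (inner 𝕜 (T ψ) ψ) := by
  rw [add_apply, inner_add_left, map_add]

theorem neg_norm_le_re_inner_apply_self (T : E →L[𝕜] E) {ψ : E} (hψ : ‖ψ‖ = 1) :
    -‖T‖ ≤ re (inner 𝕜 (T ψ) ψ) := by
  have := T.rayleighQuotient_le_norm ψ
  rw [rayleighQuotient, reApplyInnerSelf_apply, hψ, one_pow, div_one] at this
  exact neg_le_of_abs_le this

theorem bddBelow_expectationValues (T : E →L[𝕜] E) : BddBelow T.expectationValues := by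
  refine ⟨-‖T‖, ?_⟩
  rintro e ⟨ψ, hψ, rfl⟩
  exact T.neg_norm_le_re_inner_apply_self hψ

theorem sInf_expectationValues_le (T : E →L[𝕜] E) {ψ : E} (hψ : ‖ψ‖ = 1) :
    sInf T.expectationValues ≤ re (inner 𝕜 (T ψ) ψ) :=
  csInf_le T.bddBelow_expectationValues ⟨ψ, hψ, rfl⟩

end ContinuousLinearMap

open ContinuousLinearMap

theorem stmt_9_general {H : Type*} [NormedAddCommGroup H] [InnerProductSpace ℂ H]
    (A₁ P : H →L[ℂ] H)
    (ψ₁ ψ₂ : H) (E₁ E₂ p : ℝ) (hψ₁ : ‖ψ₁‖ = 1) (hψ₂ : ‖ψ₂‖ = 1)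
    (hE₁ : E₁ = sInf { e : ℝ | ∃ ψ : H, ‖ψ‖ = 1 ∧ e = (inner ℂ (A₁ ψ) ψ : ℂ).re })
    (hE₂ : E₂ = sInf { e : ℝ | ∃ ψ : H, ‖ψ‖ = 1 ∧ e = (inner ℂ ((A₁ + P) ψ) ψ : ℂ).re })
    (hg₁ : (inner ℂ (A₁ ψ₁) ψ₁ : ℂ).re = E₁)
    (hg₂ : (inner ℂ ((A₁ + P) ψ₂) ψ₂ : ℂ).re = E₂)
    (hp₁ : (inner ℂ (P ψ₁) ψ₁ : ℂ).re = p) (hp₂ : (inner ℂ (P ψ₂) ψ₂ : ℂ).re = p) :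
    E₂ = E₁ + p ∧
    (inner ℂ ((A₁ + P) ψ₁) ψ₁ : ℂ).re = E₂ ∧
    (inner ℂ (A₁ ψ₂) ψ₂ : ℂ).re = E₁ := by
  have hsum₁ : (inner ℂ ((A₁ + P) ψ₁) ψ₁ : ℂ).re = E₁ + p := by
    rw [← hg₁, ← hp₁]
    exact re_inner_add_apply_self A₁ P ψ₁
  have hsum₂ : (inner ℂ (A₁ ψ₂) ψ₂ : ℂ).re = E₂ - p := by
    rw [← hg₂, ← hp₂, eq_sub_iff_add_eq]
    exact (re_inner_add_apply_self A₁ P ψ₂).symm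
  have h₁ : E₂ ≤ E₁ + p := calc
    E₂ = sInf (A₁ + P).expectationValues := hE₂
    _ ≤ _ := (A₁ + P).sInf_expectationValues_le hψ₁
    _ = E₁ + p := hsum₁
  have h₂ : E₁ ≤ E₂ - p := calc
    E₁ = sInf A₁.expectationValues := hE₁
    _ ≤ _ := A₁.sInf_expectationValues_le hψ₂
    _ = E₂ - p := hsum₂
  exact ⟨by linarith, by linarith, by linarith⟩

/-- Hohenberg–Kohn energy inequality argument: if `A₂ = A₁ + P`, `ψᵢ` are ground states of
`Aᵢ` with energies `Eᵢ`, and both ground states have the same expectation `p` of `P`, then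
`E₂ = E₁ + p` and each `ψᵢ` is a ground state of the other operator as well. -/
theorem stmt_9 {H : Type*} [NormedAddCommGroup H] [InnerProductSpace ℂ H] [CompleteSpace H]
    (A₁ P : H →L[ℂ] H) (hA₁ : IsSelfAdjoint A₁) (hP : IsSelfAdjoint P)
    (ψ₁ ψ₂ : H) (E₁ E₂ p : ℝ) (hψ₁ : ‖ψ₁‖ = 1) (hψ₂ : ‖ψ₂‖ = 1)
    (hE₁ : E₁ = sInf { e : ℝ | ∃ ψ : H, ‖ψ‖ = 1 ∧ e = (inner ℂ (A₁ ψ) ψ : ℂ).re })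
    (hE₂ : E₂ = sInf { e : ℝ | ∃ ψ : H, ‖ψ‖ = 1 ∧ e = (inner ℂ ((A₁ + P) ψ) ψ : ℂ).re })
    (hg₁ : (inner ℂ (A₁ ψ₁) ψ₁ : ℂ).re = E₁)
    (hg₂ : (inner ℂ ((A₁ + P) ψ₂) ψ₂ : ℂ).re = E₂)
    (hp₁ : (inner ℂ (P ψ₁) ψ₁ : ℂ).re = p) (hp₂ : (inner ℂ (P ψ₂) ψ₂ : ℂ).re = p) :
    E₂ = E₁ + p ∧
    (inner ℂ ((A₁ + P) ψ₁) ψ₁ : ℂ).re = E₂ ∧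
    (inner ℂ (A₁ ψ₂) ψ₂ : ℂ).re = E₁ :=
  stmt_9_general A₁ P ψ₁ ψ₂ E₁ E₂ p hψ₁ hψ₂ hE₁ hE₂ hg₁ hg₂ hp₁ hp₂
end

section
/- For N=1 at zero coupling (λ=0): the one-mode, one-qubit Levy–Lieb functional satisfies F_LL(σ,ξ) = 1 + ξ² - t√(1-σ²) for all (σ,ξ) ∈ [-1,1] × ℝ. That is, inf{ ⟨ψ, H₀ψ⟩ : ψ normalized, σ_ψ = σ, ξ_ψ = ξ } = 1 + ξ² - t√(1-σ²), where H₀ = (-d²/dx² + x²)𝟙 - t σ_x. -/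
/-!
Completing the square, `0 ≤ ‖ψ' ± (x - c) ψ‖²`, bounds the cross term `(x - c) (‖ψ‖²)'`, and
integrating `((x - c) ‖ψ‖²)' = ‖ψ‖² + (x - c) (‖ψ‖²)'` over `ℝ` gives
`∫ ‖ψ‖² ≤ ∫ ‖ψ'‖² + (x - c)² ‖ψ‖²`. For a normalized spinor `ψ = (f, g)` centred at `ξ` this is
`⟨ψ, (-d²/dx² + x²) ψ⟩ ≥ 1 + ξ²`, while Cauchy–Schwarz gives
`2 Re ⟨f, g⟩ ≤ 2 ‖f‖ ‖g‖ = √(1 - σ²)`. Both bounds are attained by the coherent state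
`π^(-1/4) e^(-(x - ξ)²/2)` times the constant spinor `(√((1 + σ)/2), √((1 - σ)/2))`, whose density
is the normal density of mean `ξ` and variance `1/2`.
-/

open MeasureTheory Real ProbabilityTheory
open scoped NNReal

section Oscillator

variable {F : Type*} [NormedAddCommGroup F] [InnerProductSpace ℝ F]

lemma abs_mul_two_inner_le (s : ℝ) (u v : F) :
    |s * (2 * inner ℝ u v)| ≤ ‖v‖ ^ 2 + s ^ 2 * ‖u‖ ^ 2 := by
  have h := abs_real_inner_le_norm u v
  rw [abs_mul, abs_mul, abs_two]
  nlinarith [abs_nonneg s, sq_abs s, sq_nonneg (|s| * ‖u‖ - ‖v‖), abs_nonneg (inner ℝ u v),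
    norm_nonneg u]

variable [CompleteSpace F]

lemma integral_norm_sq_le_integral_norm_deriv_sq_add (c : ℝ) {ψ : ℝ → F}
    (hψ : Differentiable ℝ ψ) (h0 : Integrable fun x => ‖ψ x‖ ^ 2)
    (h1 : Integrable fun x => ‖deriv ψ x‖ ^ 2)
    (h2 : Integrable fun x => (x - c) ^ 2 * ‖ψ x‖ ^ 2) :
    ∫ x, ‖ψ x‖ ^ 2 ≤ ∫ x, (‖deriv ψ x‖ ^ 2 + (x - c) ^ 2 * ‖ψ x‖ ^ 2) := by
  set v : ℝ → ℝ := fun x => (x - c) * (2 * inner ℝ (ψ x) (deriv ψ x))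
  have hv : Integrable v := by
    refine (h1.add h2).mono' ?_ (ae_of_all _ fun x => abs_mul_two_inner_le _ _ _)
    exact (continuous_id.sub continuous_const).aestronglyMeasurable.mul
      ((hψ.continuous.aestronglyMeasurable.inner (aestronglyMeasurable_deriv ψ _)).const_mul 2)
  have hw : Integrable fun x => (x - c) * ‖ψ x‖ ^ 2 := by
    refine ((h2.add h0).div_const 2).mono'
      ((continuous_id.sub continuous_const).mul (hψ.continuous.norm.pow 2)).aestronglyMeasurable
      (ae_of_all _ fun x => ?_)
    rw [norm_mul, Real.norm_eq_abs, norm_of_nonneg (by positivity), Pi.add_apply]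
    nlinarith [sq_abs (x - c), sq_nonneg (|x - c| - 1), sq_nonneg ‖ψ x‖]
  have hderiv : ∀ x, HasDerivAt (fun x => (x - c) * ‖ψ x‖ ^ 2) (‖ψ x‖ ^ 2 + v x) x := by
    intro x
    simpa only [id, one_mul] using
      ((hasDerivAt_id x).sub_const c).fun_mul (hψ x).hasDerivAt.norm_sq
  have hzero := integral_eq_zero_of_hasDerivAt_of_integrable hderiv (h0.add hv) hw
  calc ∫ x, ‖ψ x‖ ^ 2 = (∫ x, (‖ψ x‖ ^ 2 + v x)) + ∫ x, -v x := by
        rw [integral_add h0 hv, integral_neg]; ring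
    _ = ∫ x, -v x := by rw [hzero, zero_add]
    _ ≤ ∫ x, (‖deriv ψ x‖ ^ 2 + (x - c) ^ 2 * ‖ψ x‖ ^ 2) :=
        integral_mono hv.neg (h1.add h2) fun x => (neg_le_abs _).trans (abs_mul_two_inner_le _ _ _)

lemma one_add_sq_le_integral_norm_deriv_sq_add {ψ : ℝ → F} {ξ : ℝ}
    (hψ : Differentiable ℝ ψ) (h0 : Integrable fun x => ‖ψ x‖ ^ 2)
    (h1 : Integrable fun x => ‖deriv ψ x‖ ^ 2) (h2 : Integrable fun x => x ^ 2 * ‖ψ x‖ ^ 2)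
    (h3 : Integrable fun x => x * ‖ψ x‖ ^ 2) (hnorm : ∫ x, ‖ψ x‖ ^ 2 = 1)
    (hmean : ∫ x, x * ‖ψ x‖ ^ 2 = ξ) :
    1 + ξ ^ 2 ≤ ∫ x, (‖deriv ψ x‖ ^ 2 + x ^ 2 * ‖ψ x‖ ^ 2) := by
  have expand : ∀ x, ‖deriv ψ x‖ ^ 2 + (x - ξ) ^ 2 * ‖ψ x‖ ^ 2
      = (‖deriv ψ x‖ ^ 2 + x ^ 2 * ‖ψ x‖ ^ 2 - 2 * ξ * (x * ‖ψ x‖ ^ 2)) + ξ ^ 2 * ‖ψ x‖ ^ 2 :=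
    fun x => by ring
  have hkin : Integrable fun x => ‖deriv ψ x‖ ^ 2 + x ^ 2 * ‖ψ x‖ ^ 2 := h1.add h2
  have hcen : Integrable fun x => ‖deriv ψ x‖ ^ 2 + x ^ 2 * ‖ψ x‖ ^ 2 - 2 * ξ * (x * ‖ψ x‖ ^ 2) :=
    hkin.sub (h3.const_mul _)
  have key := integral_norm_sq_le_integral_norm_deriv_sq_add ξ hψ h0 h1
    (((h2.sub (h3.const_mul (2 * ξ))).add (h0.const_mul (ξ ^ 2))).congr (ae_of_all _ fun x => by
      simp only [Pi.add_apply, Pi.sub_apply]; ring))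
  simp_rw [expand] at key
  rw [integral_add hcen (h0.const_mul _), integral_sub hkin (h3.const_mul _),
    integral_const_mul, integral_const_mul, hnorm, hmean] at key
  linarith

end Oscillator

lemma re_integral_conj_mul_le {α : Type*} [MeasurableSpace α] {μ : Measure α} {f g : α → ℂ}
    (hf : MemLp f 2 μ) (hg : MemLp g 2 μ) :
    (∫ a, starRingEnd ℂ (f a) * g a ∂μ).re ≤ √(∫ a, ‖f a‖ ^ 2 ∂μ) * √(∫ a, ‖g a‖ ^ 2 ∂μ) :=
  calc (∫ a, starRingEnd ℂ (f a) * g a ∂μ).re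
      ≤ ‖∫ a, starRingEnd ℂ (f a) * g a ∂μ‖ := Complex.re_le_norm _
    _ ≤ ∫ a, ‖f a‖ * ‖g a‖ ∂μ := by
        simpa only [norm_mul, Complex.norm_conj] using
          norm_integral_le_integral_norm fun a => starRingEnd ℂ (f a) * g a
    _ ≤ √(∫ a, ‖f a‖ ^ 2 ∂μ) * √(∫ a, ‖g a‖ ^ 2 ∂μ) := by
        simpa [Real.sqrt_eq_rpow] using integral_mul_norm_le_Lp_mul_Lq
          Real.HolderConjugate.two_two (by simpa using hf) (by simpa using hg)

section GaussianMoments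

variable (μ : ℝ) {v : ℝ≥0}

lemma integrable_id_gaussianReal : Integrable (fun x => x) (gaussianReal μ v) :=
  memLp_one_iff_integrable.mp (memLp_id_gaussianReal 1)

lemma integrable_sq_gaussianReal : Integrable (fun x => x ^ 2) (gaussianReal μ v) :=
  (memLp_id_gaussianReal 2).integrable_sq

lemma integral_sq_gaussianReal : ∫ x, x ^ 2 ∂gaussianReal μ v = v + μ ^ 2 := by
  have h := variance_eq_sub (memLp_id_gaussianReal (μ := μ) (v := v) 2)
  simp only [variance_id_gaussianReal, id, Pi.pow_apply, integral_id_gaussianReal] at h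
  linarith

lemma integrable_and_integral_of_eq_gaussianPDFReal_mul_quadratic (hv : v ≠ 0) {h : ℝ → ℝ}
    (a b c : ℝ) (hh : ∀ x, gaussianPDFReal μ v x * (a * x ^ 2 + b * x + c) = h x) :
    Integrable h ∧ ∫ x, h x = a * (v + μ ^ 2) + b * μ + c := by
  have hsq := (integrable_sq_gaussianReal μ (v := v)).const_mul a
  have hid := (integrable_id_gaussianReal μ (v := v)).const_mul b
  have hquad := (hsq.fun_add hid).fun_add (integrable_const c)
  constructor
  · rw [gaussianReal_of_var_ne_zero _ hv, integrable_withDensity_iff_integrable_smul'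
      (measurable_gaussianPDF μ v) (ae_of_all _ fun _ => gaussianPDF_lt_top)] at hquad
    exact hquad.congr (ae_of_all _ fun x => by simp only [← hh, toReal_gaussianPDF, smul_eq_mul])
  · have hG := integral_gaussianReal_eq_integral_smul (μ := μ)
      (f := fun x => a * x ^ 2 + b * x + c) hv
    simp only [smul_eq_mul, hh] at hG
    rw [← hG, integral_add (hsq.fun_add hid) (integrable_const c), integral_add hsq hid,
      integral_const_mul, integral_const_mul, integral_sq_gaussianReal]
    simp

end GaussianMoments

noncomputable def coherentState (ξ x : ℝ) : ℝ := (√√π)⁻¹ * exp (-(x - ξ) ^ 2 / 2)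

lemma coherentState_sq (ξ x : ℝ) : coherentState ξ x ^ 2 = gaussianPDFReal ξ 2⁻¹ x := by
  rw [coherentState, gaussianPDFReal_def, mul_pow, inv_pow, sq_sqrt (sqrt_nonneg π),
    ← exp_nat_mul]
  congr 2
  · push_cast; ring_nf
  · push_cast; ring

lemma hasDerivAt_coherentState (ξ x : ℝ) :
    HasDerivAt (coherentState ξ) (-(x - ξ) * coherentState ξ x) x := by
  have h : HasDerivAt (fun y => -(y - ξ) ^ 2 / 2) (-(x - ξ)) x :=
    ((((hasDerivAt_id x).sub_const ξ).fun_pow 2).fun_neg.div_const 2).congr_deriv (by simp; ring)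
  exact (h.exp.const_mul (√√π)⁻¹).congr_deriv (by rw [coherentState]; ring)

lemma hasDerivAt_ofReal_mul_coherentState (c ξ x : ℝ) :
    HasDerivAt (fun y => ((c * coherentState ξ y : ℝ) : ℂ))
      ((c * (-(x - ξ) * coherentState ξ x) : ℝ) : ℂ) x :=
  ((hasDerivAt_coherentState ξ x).const_mul c).ofReal_comp

lemma norm_ofReal_mul_coherentState_sq (c ξ x : ℝ) :
    ‖((c * coherentState ξ x : ℝ) : ℂ)‖ ^ 2 = c ^ 2 * gaussianPDFReal ξ 2⁻¹ x := by
  rw [Complex.norm_real, norm_eq_abs, sq_abs, mul_pow, coherentState_sq]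

lemma norm_deriv_ofReal_mul_coherentState_sq (c ξ x : ℝ) :
    ‖deriv (fun y => ((c * coherentState ξ y : ℝ) : ℂ)) x‖ ^ 2
      = c ^ 2 * ((x - ξ) ^ 2 * gaussianPDFReal ξ 2⁻¹ x) := by
  rw [(hasDerivAt_ofReal_mul_coherentState c ξ x).deriv, Complex.norm_real, norm_eq_abs, sq_abs,
    mul_pow, mul_pow, coherentState_sq, neg_sq]

lemma sqrt_one_add_half_mul_sqrt_one_sub_half {σ : ℝ} (hσ : -1 ≤ σ) :
    √((1 + σ) / 2) * √((1 - σ) / 2) = √(1 - σ ^ 2) / 2 := by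
  rw [← Real.sqrt_mul (by linarith),
    show (1 + σ) / 2 * ((1 - σ) / 2) = (1 - σ ^ 2) / 2 ^ 2 by ring, sqrt_div' _ (by positivity),
    sqrt_sq zero_le_two]

def constrainedEnergies (t σ ξ : ℝ) : Set ℝ :=
  { e : ℝ | ∃ f g : ℝ → ℂ,
      Differentiable ℝ f ∧ Differentiable ℝ g ∧
      Integrable (fun x => ‖f x‖ ^ 2) ∧ Integrable (fun x => ‖g x‖ ^ 2) ∧
      Integrable (fun x => ‖deriv f x‖ ^ 2) ∧ Integrable (fun x => ‖deriv g x‖ ^ 2) ∧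
      Integrable (fun x => x ^ 2 * (‖f x‖ ^ 2 + ‖g x‖ ^ 2)) ∧
      Integrable (fun x => x * (‖f x‖ ^ 2 + ‖g x‖ ^ 2)) ∧
      Integrable (fun x => (starRingEnd ℂ) (f x) * g x) ∧
      (∫ x : ℝ, (‖f x‖ ^ 2 + ‖g x‖ ^ 2)) = 1 ∧
      (∫ x : ℝ, (‖f x‖ ^ 2 - ‖g x‖ ^ 2)) = σ ∧
      (∫ x : ℝ, x * (‖f x‖ ^ 2 + ‖g x‖ ^ 2)) = ξ ∧
      e = (∫ x : ℝ, (‖deriv f x‖ ^ 2 + ‖deriv g x‖ ^ 2 + x ^ 2 * (‖f x‖ ^ 2 + ‖g x‖ ^ 2)))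
          - 2 * t * (∫ x : ℝ, (starRingEnd ℂ) (f x) * g x).re }

lemma mem_constrainedEnergies_coherentState (t ξ : ℝ) {σ : ℝ} (hσ : σ ∈ Set.Icc (-1 : ℝ) 1) :
    1 + ξ ^ 2 - t * √(1 - σ ^ 2) ∈ constrainedEnergies t σ ξ := by
  obtain ⟨hσ₁, hσ₂⟩ := hσ
  set a := √((1 + σ) / 2)
  set b := √((1 - σ) / 2)
  have ha : a ^ 2 = (1 + σ) / 2 := sq_sqrt (by linarith)
  have hb : b ^ 2 = (1 - σ) / 2 := sq_sqrt (by linarith)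
  set ρ := gaussianPDFReal ξ 2⁻¹
  set f : ℝ → ℂ := fun x => (a * coherentState ξ x : ℝ)
  set g : ℝ → ℂ := fun x => (b * coherentState ξ x : ℝ)
  have hquad : ∀ {h : ℝ → ℝ} (p q r : ℝ), (∀ x, ρ x * (p * x ^ 2 + q * x + r) = h x) →
      Integrable h ∧ ∫ x, h x = p * (2⁻¹ + ξ ^ 2) + q * ξ + r := fun p q r hh => by
    convert integrable_and_integral_of_eq_gaussianPDFReal_mul_quadratic ξ (by norm_num) p q r hh
      using 4
    norm_num
  have hconj : ∀ x, starRingEnd ℂ (f x) * g x = ((a * b * ρ x : ℝ) : ℂ) := fun x => by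
    rw [Complex.conj_ofReal, ← Complex.ofReal_mul, show ρ x = _ from (coherentState_sq ξ x).symm]
    ring_nf
  have hoverlap := hquad (h := fun x => a * b * ρ x) 0 0 (a * b) fun x => by ring
  have hcross : (∫ x, starRingEnd ℂ (f x) * g x).re = √(1 - σ ^ 2) / 2 := by
    rw [integral_congr_ae (ae_of_all _ hconj), integral_complex_ofReal, Complex.ofReal_re,
      hoverlap.2, ← sqrt_one_add_half_mul_sqrt_one_sub_half hσ₁]
    ring
  have hkin : ∫ x, (‖deriv f x‖ ^ 2 + ‖deriv g x‖ ^ 2 + x ^ 2 * (‖f x‖ ^ 2 + ‖g x‖ ^ 2))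
      = 1 + ξ ^ 2 := (hquad 2 (-2 * ξ) (ξ ^ 2) fun x => ?_).2.trans (by ring)
  refine ⟨f, g, fun x => (hasDerivAt_ofReal_mul_coherentState a ξ x).differentiableAt,
    fun x => (hasDerivAt_ofReal_mul_coherentState b ξ x).differentiableAt,
    (hquad 0 0 (a ^ 2) fun x => ?_).1, (hquad 0 0 (b ^ 2) fun x => ?_).1,
    (hquad (a ^ 2) (-2 * ξ * a ^ 2) (ξ ^ 2 * a ^ 2) fun x => ?_).1,
    (hquad (b ^ 2) (-2 * ξ * b ^ 2) (ξ ^ 2 * b ^ 2) fun x => ?_).1,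
    (hquad 1 0 0 fun x => ?_).1, (hquad 0 1 0 fun x => ?_).1,
    hoverlap.1.ofReal.congr (ae_of_all _ fun x => (hconj x).symm),
    (hquad 0 0 1 fun x => ?_).2.trans (by ring), (hquad 0 0 σ fun x => ?_).2.trans (by ring),
    (hquad 0 1 0 fun x => ?_).2.trans (by ring), by rw [hkin, hcross]; ring⟩
  all_goals
    simp only [f, g, norm_ofReal_mul_coherentState_sq, norm_deriv_ofReal_mul_coherentState_sq,
      ha, hb]
    ring

lemma le_of_mem_constrainedEnergies {t σ ξ e : ℝ} (ht : 0 ≤ t)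
    (he : e ∈ constrainedEnergies t σ ξ) : 1 + ξ ^ 2 - t * √(1 - σ ^ 2) ≤ e := by
  obtain ⟨f, g, hf, hg, hf₂, hg₂, hf'₂, hg'₂, hx₂, hx, -, hnorm, hσ, hξ, rfl⟩ := he
  set ψ : ℝ → WithLp 2 (ℂ × ℂ) := fun x => WithLp.toLp 2 (f x, g x)
  have hψ : ∀ x, HasDerivAt ψ (WithLp.toLp 2 (deriv f x, deriv g x)) x := fun x =>
    (WithLp.prodContinuousLinearEquiv 2 ℝ ℂ ℂ).symm.hasFDerivAt.comp_hasDerivAt x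
      ((hf x).hasDerivAt.prodMk (hg x).hasDerivAt)
  have hψ₂ : ∀ x, ‖ψ x‖ ^ 2 = ‖f x‖ ^ 2 + ‖g x‖ ^ 2 := fun x => WithLp.prod_norm_sq_eq_of_L2 _
  have hψ'₂ : ∀ x, ‖deriv ψ x‖ ^ 2 = ‖deriv f x‖ ^ 2 + ‖deriv g x‖ ^ 2 := fun x => by
    rw [(hψ x).deriv]; exact WithLp.prod_norm_sq_eq_of_L2 _
  have hosc := one_add_sq_le_integral_norm_deriv_sq_add (fun x => (hψ x).differentiableAt)
    (by simpa only [hψ₂] using hf₂.fun_add hg₂) (by simpa only [hψ'₂] using hf'₂.fun_add hg'₂)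
    (by simpa only [hψ₂] using hx₂) (by simpa only [hψ₂] using hx)
    (by simpa only [hψ₂] using hnorm) (by simpa only [hψ₂] using hξ)
  simp only [hψ₂, hψ'₂] at hosc
  rw [integral_add hf₂ hg₂] at hnorm
  rw [integral_sub hf₂ hg₂] at hσ
  have hf_mass : ∫ x, ‖f x‖ ^ 2 = (1 + σ) / 2 := by linarith
  have hg_mass : ∫ x, ‖g x‖ ^ 2 = (1 - σ) / 2 := by linarith
  have hσ₁ : -1 ≤ σ := by
    linarith [(integral_nonneg fun x => by positivity : 0 ≤ ∫ x, ‖f x‖ ^ 2)]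
  have hcross := re_integral_conj_mul_le
    ((memLp_two_iff_integrable_sq_norm hf.continuous.aestronglyMeasurable).mpr hf₂)
    ((memLp_two_iff_integrable_sq_norm hg.continuous.aestronglyMeasurable).mpr hg₂)
  rw [hf_mass, hg_mass, sqrt_one_add_half_mul_sqrt_one_sub_half hσ₁] at hcross
  linarith [mul_le_mul_of_nonneg_left hcross ht]

/-- For N=1 at zero coupling (`λ = 0`): the quantum Rabi Levy–Lieb functional equals
`1 + ξ² - t√(1-σ²)`; the infimum of `⟨ψ,H₀ψ⟩` with
`H₀ = (-d²/dx² + x²)𝟙 - tσ_x` over normalized `ψ = (f,g)` with magnetization `σ` and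
displacement `ξ`. -/
theorem stmt_12 (t : ℝ) (ht : 0 < t) (σ ξ : ℝ) (hσ : σ ∈ Set.Icc (-1 : ℝ) 1) :
    sInf { e : ℝ | ∃ f g : ℝ → ℂ,
      Differentiable ℝ f ∧ Differentiable ℝ g ∧
      Integrable (fun x => ‖f x‖ ^ 2) ∧ Integrable (fun x => ‖g x‖ ^ 2) ∧
      Integrable (fun x => ‖deriv f x‖ ^ 2) ∧ Integrable (fun x => ‖deriv g x‖ ^ 2) ∧
      Integrable (fun x => x ^ 2 * (‖f x‖ ^ 2 + ‖g x‖ ^ 2)) ∧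
      Integrable (fun x => x * (‖f x‖ ^ 2 + ‖g x‖ ^ 2)) ∧
      Integrable (fun x => (starRingEnd ℂ) (f x) * g x) ∧
      (∫ x : ℝ, (‖f x‖ ^ 2 + ‖g x‖ ^ 2)) = 1 ∧
      (∫ x : ℝ, (‖f x‖ ^ 2 - ‖g x‖ ^ 2)) = σ ∧
      (∫ x : ℝ, x * (‖f x‖ ^ 2 + ‖g x‖ ^ 2)) = ξ ∧
      e = (∫ x : ℝ, (‖deriv f x‖ ^ 2 + ‖deriv g x‖ ^ 2 + x ^ 2 * (‖f x‖ ^ 2 + ‖g x‖ ^ 2)))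
          - 2 * t * (∫ x : ℝ, (starRingEnd ℂ) (f x) * g x).re }
    = 1 + ξ ^ 2 - t * Real.sqrt (1 - σ ^ 2) := by
  show sInf (constrainedEnergies t σ ξ) = _
  exact IsLeast.csInf_eq ⟨mem_constrainedEnergies_coherentState t ξ hσ,
    fun _ he => le_of_mem_constrainedEnergies ht.le he⟩
end
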